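/- Fix an integer b ≥ 1 and define, for complex y, the sequences A₀(y) = y, B₀(y) = 1, Aₙ(y) = (Aₙ₋₁(y)² + 2Bₙ₋₁(y)²)^b and Bₙ(y) = (2Aₙ₋₁(y)Bₙ₋₁(y) + Bₙ₋₁(y)²)^b (the constrained partition functions of the 3-state Potts model on the n-th generation hierarchical lattice with the two boundary spins equal, respectively different). Then for every n ≥ 1 and every complex y with 2y + 1 ≠ 0, Aₙ(y) = Aₙ₋₁(R_b(y))·((2y + 1)^b)^{(2b)^{n−1}} and Bₙ(y) = Bₙ₋₁(R_b(y))·((2y + 1)^b)^{(2b)^{n−1}}, where R_b(y) = ((y² + 2)/(2y + 1))^b. -/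
import Mathlib


open Complex

/-- The exact RG map of the 3-state Potts model on the `b`-branch diamond
hierarchical lattice. -/
noncomputable def pottsRb (b : ℕ) (y : ℂ) : ℂ := ((y ^ 2 + 2) / (2 * y + 1)) ^ b

/-- `(pottsAB b n y).1` (resp. `.2`) is the constrained partition function `Aₙ(y)`
(resp. `Bₙ(y)`) of the 3-state Potts model on the `n`-th generation `b`-branch
diamond hierarchical lattice with the two boundary spins equal (resp. different). -/
noncomputable def pottsAB (b : ℕ) : ℕ → ℂ → ℂ × ℂ
  | 0, y => (y, 1)
  | n + 1, y =>
      (((pottsAB b n y).1 ^ 2 + 2 * (pottsAB b n y).2 ^ 2) ^ b,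
       (2 * (pottsAB b n y).1 * (pottsAB b n y).2 + (pottsAB b n y).2 ^ 2) ^ b)


lemma potts_aux (b : ℕ) (y : ℂ) (hy : 2 * y + 1 ≠ 0) (n : ℕ) :
    (pottsAB b (n + 1) y).1 =
      (pottsAB b n (pottsRb b y)).1 * ((2 * y + 1) ^ b) ^ ((2 * b) ^ n) ∧
    (pottsAB b (n + 1) y).2 =
      (pottsAB b n (pottsRb b y)).2 * ((2 * y + 1) ^ b) ^ ((2 * b) ^ n) := by
  induction n with
  | zero =>
      have hc : (2 * y + 1) ^ b ≠ 0 := pow_ne_zero _ hy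
      simp only [pottsAB, pottsRb, pow_zero, pow_one]
      constructor
      · rw [div_pow, div_mul_cancel₀ _ hc]
        ring_nf
      · ring_nf
  | succ n ih =>
      obtain ⟨hA, hB⟩ := ih
      set A := (pottsAB b n (pottsRb b y)).1
      set B := (pottsAB b n (pottsRb b y)).2
      set c := (2 * y + 1) ^ b
      set k := (2 * b) ^ n
      have hexp : (2 * b) ^ (n + 1) = k * 2 * b := by simp [k]; ring
      have key : ∀ X : ℂ, (X * (c ^ k) ^ 2) ^ b = X ^ b * c ^ (k * 2 * b) := by
        intro X
        rw [mul_pow, ← pow_mul, ← pow_mul, mul_assoc]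
      constructor
      · show (((pottsAB b (n + 1) y).1) ^ 2 + 2 * ((pottsAB b (n + 1) y).2) ^ 2) ^ b = _
        rw [hA, hB, hexp]
        show _ = (A ^ 2 + 2 * B ^ 2) ^ b * c ^ (k * 2 * b)
        rw [← key]
        exact congrArg (· ^ b) (by ring)
      · show (2 * (pottsAB b (n + 1) y).1 * (pottsAB b (n + 1) y).2 +
            ((pottsAB b (n + 1) y).2) ^ 2) ^ b = _
        rw [hA, hB, hexp]
        show _ = (2 * A * B + B ^ 2) ^ b * c ^ (k * 2 * b)
        rw [← key]
        exact congrArg (· ^ b) (by ring)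


/-- The decimation RG step: `Aₙ(y) = Aₙ₋₁(R_b(y))·c(y)^{(2b)^{n-1}}` and
`Bₙ(y) = Bₙ₋₁(R_b(y))·c(y)^{(2b)^{n-1}}` with `c(y) = (2y+1)^b`. -/
theorem stmt_5 (b : ℕ) (hb : 1 ≤ b) (n : ℕ) (hn : 1 ≤ n) (y : ℂ)
    (hy : 2 * y + 1 ≠ 0) :
    (pottsAB b n y).1 =
      (pottsAB b (n - 1) (pottsRb b y)).1 * ((2 * y + 1) ^ b) ^ ((2 * b) ^ (n - 1)) ∧
    (pottsAB b n y).2 =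
      (pottsAB b (n - 1) (pottsRb b y)).2 * ((2 * y + 1) ^ b) ^ ((2 * b) ^ (n - 1)) := by
  cases n with
  | zero => omega
  | succ m => simpa using potts_aux b y hy m
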